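/- Let Ω ⊆ ℝ² be open, let 0 < α < 1 and M₁, M₂ > 0, and let 𝒞 be a countable collection of closed axis-parallel rectangles R = I_R × J_R (products of compact intervals of positive length) such that: (1) R ⊆ Ω for every R ∈ 𝒞; (2) Ω = ⋃_{R∈𝒞} αR, where αR denotes the rectangle concentric with R whose side lengths are α times those of R; (3) every point of Ω belongs to at most M₁ of the rectangles R ∈ 𝒞; and (4) whenever R, R′ ∈ 𝒞 intersect, one has 1/M₂ < |I_R|/|I_{R′}| < M₂ and 1/M₂ < |J_R|/|J_{R′}| < M₂. Then there exist smooth functions ψ_R : ℝ² → ℝ (R ∈ 𝒞) such that: each ψ_R is supported in R; Σ_{R∈𝒞} ψ_R(x) = χ_Ω(x) for every x ∈ ℝ² (at each point at most M₁ summands are nonzero); and for every M ∈ ℕ there is a constant C = C(α, M₁, M₂, M) such that |∂^β ψ_R(x)| ≤ C |I_R|^{-β₁} |J_R|^{-β₂} for every R ∈ 𝒞, every x ∈ ℝ², and every multi-index β = (β₁, β₂) with |β| ≤ M. -/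

import Mathlib

/-!
Enumerate the rectangles as `R₀, R₁, …` and let `w_k = f_k ⊗ g_k` be a tensor product of
one-dimensional bumps, equal to `1` on `αR_k` and supported in `R_k`. Put
`ψ_i = w_i ∏_{k < i} (1 - w_k)`. These telescope: a finite partial sum containing every rectangle
through `x` equals `1 - ∏_k (1 - w_k x)`, which is `1` on `Ω` (some `w_j x = 1`) and `0` off `Ω`.

Near `x`, only the at most `M₁` earlier rectangles containing `x` contribute, so `ψ_i` is locally a
signed sum of at most `2 ^ M₁` tensor products `(∏ f_k) ⊗ (∏ g_k)` over rectangles meeting `R_i`.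
Their side lengths are comparable to those of `R_i`, so the Leibniz rule bounds each mixed
derivative by `C |I_R|^{-β₁} |J_R|^{-β₂}`.
-/

open Topology Filter Finset Set
open scoped ContDiff

section ProductRule

variable {ι 𝕜 E 𝔸 : Type*} [NontriviallyNormedField 𝕜] [NormedAddCommGroup E] [NormedSpace 𝕜 E]
  [NormedCommRing 𝔸] [NormedAlgebra 𝕜 𝔸] [NormOneClass 𝔸]

theorem norm_iteratedFDeriv_prod_le_of_forall_le [DecidableEq ι] {s : Finset ι} {f : ι → E → 𝔸}
    {n : ℕ} (hf : ∀ k ∈ s, ContDiff 𝕜 n (f k)) {x : E} {B A : ℝ} (hB : 0 ≤ B) (hA : 0 ≤ A)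
    (hbound : ∀ k ∈ s, ∀ j ≤ n, ‖iteratedFDeriv 𝕜 j (f k) x‖ ≤ B * A ^ j) :
    ‖iteratedFDeriv 𝕜 n (fun y => ∏ k ∈ s, f k y) x‖ ≤ (2 ^ n * B) ^ #s * A ^ n := by
  induction s using Finset.induction generalizing n with
  | empty =>
    rcases n.eq_zero_or_pos with rfl | hn
    · simp
    · simp [iteratedFDeriv_const_of_ne hn.ne', hA]
  | insert a s ha ih =>
    rw [Finset.forall_mem_insert] at hf hbound
    simp only [prod_insert ha, card_insert_of_notMem ha]
    grw [norm_iteratedFDeriv_mul_le hf.1 (contDiff_prod hf.2) x le_rfl]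
    calc ∑ i ∈ range (n + 1), (n.choose i : ℝ) * ‖iteratedFDeriv 𝕜 i (f a) x‖ *
          ‖iteratedFDeriv 𝕜 (n - i) (fun y => ∏ k ∈ s, f k y) x‖
        ≤ ∑ i ∈ range (n + 1),
            (n.choose i : ℝ) * (B * A ^ i) * ((2 ^ n * B) ^ #s * A ^ (n - i)) := by
          gcongr with i hi
          · exact hbound.1 i (Nat.lt_succ_iff.mp (mem_range.mp hi))
          · calc _ ≤ (2 ^ (n - i) * B) ^ #s * A ^ (n - i) :=
                  ih (fun k hk => (hf.2 k hk).of_le (by exact_mod_cast n.sub_le i))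
                    (fun k hk j hj => hbound.2 k hk j (hj.trans (n.sub_le i)))
              _ ≤ (2 ^ n * B) ^ #s * A ^ (n - i) := by
                  gcongr
                  · norm_num
                  · exact n.sub_le i
      _ = (2 ^ n * B) ^ (#s + 1) * A ^ n := by
          have hterm : ∀ i ∈ range (n + 1), (n.choose i : ℝ) * (B * A ^ i) *
              ((2 ^ n * B) ^ #s * A ^ (n - i)) = n.choose i * (B * (2 ^ n * B) ^ #s * A ^ n) := by
            intro i hi
            rw [← pow_mul_pow_sub A (Nat.lt_succ_iff.mp (mem_range.mp hi))]
            ring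
          rw [sum_congr rfl hterm, ← sum_mul, ← Nat.cast_sum, Nat.sum_range_choose]
          push_cast
          ring

end ProductRule

theorem ContDiff.exists_forall_abs_iteratedDeriv_le {f : ℝ → ℝ} (hf : ContDiff ℝ ∞ f)
    (hsupp : HasCompactSupport f) (M : ℕ) :
    ∃ K, 1 ≤ K ∧ ∀ j ≤ M, ∀ t, |iteratedDeriv j f t| ≤ K := by
  have hbound : ∀ j : ℕ, ∃ C, ∀ t, ‖iteratedFDeriv ℝ j f t‖ ≤ C := fun j =>
    (hf.continuous_iteratedFDeriv (by exact_mod_cast le_top)).bounded_above_of_compact_support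
      (hsupp.iteratedFDeriv j)
  choose C hC using hbound
  refine ⟨1 + ∑ j ∈ range (M + 1), |C j|, ?_, fun j hj t => ?_⟩
  · have := sum_nonneg fun j (_ : j ∈ range (M + 1)) => abs_nonneg (C j)
    linarith
  · have := single_le_sum (fun j _ => abs_nonneg (C j)) (mem_range.2 (Nat.lt_succ_of_le hj))
    have := hC j t
    rw [norm_iteratedFDeriv_eq_norm_iteratedDeriv, Real.norm_eq_abs] at this
    linarith [le_abs_self (C j)]

section MixedDerivative

variable {σ 𝕜 : Type*} [NontriviallyNormedField 𝕜]

theorem iteratedDeriv_iteratedDeriv_eq_sum_of_eventuallyEq {ψ : 𝕜 × 𝕜 → 𝕜} {x₁ x₂ : 𝕜}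
    {m n : ℕ} (P : Finset σ) {F G : σ → 𝕜 → 𝕜} (hF : ∀ s ∈ P, ContDiffAt 𝕜 m (F s) x₁)
    (hG : ∀ s ∈ P, ContDiffAt 𝕜 n (G s) x₂)
    (hψ : ψ =ᶠ[𝓝 (x₁, x₂)] fun p => ∑ s ∈ P, F s p.1 * G s p.2) :
    iteratedDeriv m (fun u => iteratedDeriv n (fun v => ψ (u, v)) x₂) x₁ =
      ∑ s ∈ P, iteratedDeriv m (F s) x₁ * iteratedDeriv n (G s) x₂ := by
  have hinner : (fun u => iteratedDeriv n (fun v => ψ (u, v)) x₂) =ᶠ[𝓝 x₁]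
      fun u => ∑ s ∈ P, iteratedDeriv n (G s) x₂ * F s u := by
    filter_upwards [hψ.curry_nhds] with u hu
    rw [EventuallyEq.iteratedDeriv_eq n hu,
      iteratedDeriv_fun_sum fun s hs => contDiffAt_const.mul (hG s hs)]
    simp only [iteratedDeriv_const_mul_field, mul_comm]
  rw [hinner.iteratedDeriv_eq, iteratedDeriv_fun_sum fun s hs => contDiffAt_const.mul (hF s hs)]
  simp only [iteratedDeriv_const_mul_field]
  exact sum_congr rfl fun s _ => mul_comm _ _

theorem iteratedDeriv_iteratedDeriv_eq_zero_of_notMem_tsupport {ψ : 𝕜 × 𝕜 → 𝕜} {x₁ x₂ : 𝕜}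
    (m n : ℕ) (hx : (x₁, x₂) ∉ tsupport ψ) :
    iteratedDeriv m (fun u => iteratedDeriv n (fun v => ψ (u, v)) x₂) x₁ = 0 := by
  rw [notMem_tsupport_iff_eventuallyEq] at hx
  simpa using iteratedDeriv_iteratedDeriv_eq_sum_of_eventuallyEq (m := m) (n := n)
    (∅ : Finset 𝕜) (F := fun _ => id) (G := fun _ => id) (by simp) (by simp)
    (by simpa [Pi.zero_def] using hx)

end MixedDerivative

noncomputable section SequentialPartition

variable {ι X : Type*} (e : ι ↪ ℕ)

def predecessors (i : ι) : Finset ι := (range (e i)).preimage e e.injective.injOn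

@[simp]
theorem mem_predecessors {i k : ι} : k ∈ predecessors e i ↔ e k < e i := by
  simp [predecessors]

def sequentialPartition (w : ι → X → ℝ) (i : ι) (x : X) : ℝ :=
  w i x * ∏ k ∈ predecessors e i, (1 - w k x)

variable {e}

theorem contDiff_sequentialPartition {E : Type*} [NormedAddCommGroup E] [NormedSpace ℝ E]
    {w : ι → E → ℝ} {n : WithTop ℕ∞} (hw : ∀ k, ContDiff ℝ n (w k)) (i : ι) :
    ContDiff ℝ n (sequentialPartition e w i) :=
  (hw i).mul (contDiff_prod fun k _ => contDiff_const.sub (hw k))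

variable {w : ι → X → ℝ}

theorem support_sequentialPartition_subset (i : ι) :
    Function.support (sequentialPartition e w i) ⊆ Function.support (w i) :=
  Function.support_mul_subset_left _ _

theorem hasSum_sequentialPartition {x : X} (T : Finset ι) (hT : ∀ k ∉ T, w k x = 0) :
    HasSum (fun i => sequentialPartition e w i x) (1 - ∏ k ∈ T, (1 - w k x)) := by
  classical
  have hpred : ∀ i, ∏ k ∈ predecessors e i, (1 - w k x) =
      ∏ k ∈ T with e k < e i, (1 - w k x) := by
    intro i
    rw [← prod_filter_of_ne (p := (· ∈ T)) fun k _ hk =>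
      by_contra fun hkT => hk (by simp [hT k hkT])]
    congr 1
    ext k
    simp [and_comm]
  have hsum : ∑ i ∈ T, sequentialPartition e w i x = 1 - ∏ k ∈ T, (1 - w k x) := by
    -- order `ι` through `e`, so that `j < i` in `prod_one_sub_ordered` means `e j < e i`
    let := LinearOrder.lift' e e.injective
    rw [prod_one_sub_ordered, sub_sub_cancel]
    exact sum_congr rfl fun i _ => by rw [sequentialPartition, hpred]; rfl
  exact hsum ▸ hasSum_sum_of_ne_finset_zero fun i hi => by simp [sequentialPartition, hT i hi]

theorem sequentialPartition_eventuallyEq_sum_powerset [DecidableEq ι] {l : Filter X} {i : ι}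
    {A : Finset ι} (hA : A ⊆ predecessors e i)
    (hvanish : ∀ k ∈ predecessors e i, k ∉ A → ∀ᶠ y in l, w k y = 0) :
    sequentialPartition e w i =ᶠ[l]
      fun y => ∑ S ∈ A.powerset, (-1) ^ #S * ∏ k ∈ insert i S, w k y := by
  have hi : i ∉ A := fun h => by simpa using hA h
  filter_upwards [(eventually_all_finset _).2 fun k hk =>
    hvanish k (mem_sdiff.1 hk).1 (mem_sdiff.1 hk).2] with y hy
  rw [sequentialPartition, ← prod_subset hA fun k hk hkA => by simp [hy k (mem_sdiff.2 ⟨hk, hkA⟩)],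
    prod_sub, mul_sum]
  refine sum_congr rfl fun S hS => ?_
  rw [prod_insert fun h => hi (mem_powerset.1 hS h)]
  simp only [prod_const_one, mul_one]
  ring

theorem hasSum_sequentialPartition_eq_one_of_eq_one {x : X} (T : Finset ι)
    (hT : ∀ k ∉ T, w k x = 0) {j : ι} (hj : w j x = 1) :
    HasSum (fun i => sequentialPartition e w i x) 1 := by
  have hjT : j ∈ T := by_contra fun h => by simp [hT j h] at hj
  have hsum := hasSum_sequentialPartition (e := e) T hT
  rwa [prod_eq_zero hjT (by simp [hj]), sub_zero] at hsum

end SequentialPartition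

noncomputable section Bumps

variable (φ : ContDiffBump (0 : ℝ))

def intervalBump (a b t : ℝ) : ℝ := φ (2 / (b - a) * (t - (a + b) / 2))

def rectBump (a b c d : ℝ) (p : ℝ × ℝ) : ℝ := intervalBump φ a b p.1 * intervalBump φ c d p.2

variable {φ} {a b c d : ℝ}

theorem contDiff_intervalBump {n : ℕ∞} : ContDiff ℝ n (intervalBump φ a b) :=
  φ.contDiff.comp (contDiff_const.mul (contDiff_id.sub contDiff_const))

theorem support_intervalBump_subset (hφ : φ.rOut ≤ 1) (hab : a < b) :
    Function.support (intervalBump φ a b) ⊆ Icc a b := by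
  intro t ht
  have hr : 0 < 2 / (b - a) := div_pos two_pos (sub_pos.2 hab)
  rw [Function.mem_support, intervalBump, ← Function.mem_support, φ.support_eq, mem_ball_zero_iff,
    Real.norm_eq_abs, abs_mul, abs_of_pos hr, ← lt_div_iff₀' hr] at ht
  have ht' : |t - (a + b) / 2| < (b - a) / 2 := by
    calc _ < φ.rOut / (2 / (b - a)) := ht
      _ ≤ 1 / (2 / (b - a)) := by gcongr
      _ = (b - a) / 2 := one_div_div _ _
  constructor <;> linarith [abs_lt.1 ht']

theorem intervalBump_eq_one (hab : a < b) {t : ℝ}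
    (ht : t ∈ Icc ((a + b) / 2 - φ.rIn * (b - a) / 2) ((a + b) / 2 + φ.rIn * (b - a) / 2)) :
    intervalBump φ a b t = 1 := by
  have hr : 0 < 2 / (b - a) := div_pos two_pos (sub_pos.2 hab)
  apply φ.one_of_mem_closedBall
  rw [mem_closedBall_zero_iff, Real.norm_eq_abs, abs_mul, abs_of_pos hr, ← le_div_iff₀' hr,
    div_div_eq_mul_div, abs_le]
  constructor <;> linarith [ht.1, ht.2]

theorem abs_iteratedDeriv_intervalBump_le (hab : a < b) {j : ℕ} {K : ℝ}
    (hK : ∀ s, |iteratedDeriv j φ s| ≤ K) (t : ℝ) :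
    |iteratedDeriv j (intervalBump φ a b) t| ≤ K * (2 / (b - a)) ^ j := by
  have hr : 0 < 2 / (b - a) := div_pos two_pos (sub_pos.2 hab)
  have hscale := iteratedDeriv_comp_const_mul (n := j) φ.contDiff (2 / (b - a))
  have hshift := congrFun (iteratedDeriv_comp_sub_const (n := j)
    (f := fun s => φ (2 / (b - a) * s)) (s := (a + b) / 2)) t
  rw [show iteratedDeriv j (intervalBump φ a b) t = _ from hshift.trans (congrFun hscale _),
    abs_mul, abs_pow, abs_of_pos hr, mul_comm]
  gcongr
  exact hK _

theorem contDiff_rectBump {n : ℕ∞} : ContDiff ℝ n (rectBump φ a b c d) :=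
  (contDiff_intervalBump.comp contDiff_fst).mul (contDiff_intervalBump.comp contDiff_snd)

theorem support_rectBump_subset (hφ : φ.rOut ≤ 1) (hab : a < b) (hcd : c < d) :
    Function.support (rectBump φ a b c d) ⊆ Icc a b ×ˢ Icc c d := fun _ hp =>
  ⟨support_intervalBump_subset hφ hab (left_ne_zero_of_mul hp),
    support_intervalBump_subset hφ hcd (right_ne_zero_of_mul hp)⟩

theorem rectBump_eq_one (hab : a < b) (hcd : c < d) {p : ℝ × ℝ}
    (hp : p ∈ Icc ((a + b) / 2 - φ.rIn * (b - a) / 2) ((a + b) / 2 + φ.rIn * (b - a) / 2) ×ˢ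
      Icc ((c + d) / 2 - φ.rIn * (d - c) / 2) ((c + d) / 2 + φ.rIn * (d - c) / 2)) :
    rectBump φ a b c d p = 1 := by
  rw [rectBump, intervalBump_eq_one hab hp.1, intervalBump_eq_one hcd hp.2, mul_one]

end Bumps

section RectanglePartition

variable {ι : Type*} {φ : ContDiffBump (0 : ℝ)} (e : ι ↪ ℕ) {a b c d : ι → ℝ}

theorem abs_iteratedDeriv_prod_intervalBump_le {M N n : ℕ} {K Λ L : ℝ} (hn : n ≤ M) (hK1 : 1 ≤ K)
    (hK : ∀ j ≤ M, ∀ t, |iteratedDeriv j φ t| ≤ K) (hΛ : 1 ≤ Λ) (hL : 0 < L)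
    {s : Finset ι} (hs : #s ≤ N + 1) (hab : ∀ k ∈ s, a k < b k)
    (hcomp : ∀ k ∈ s, L / (b k - a k) ≤ Λ) (t : ℝ) :
    |iteratedDeriv n (fun u => ∏ k ∈ s, intervalBump φ (a k) (b k) u) t| ≤
      (2 ^ M * K) ^ (N + 1) * (2 * Λ) ^ M * L ^ (-(n : ℤ)) := by
  classical
  have hfactor : ∀ k ∈ s, ∀ j ≤ n,
      ‖iteratedFDeriv ℝ j (intervalBump φ (a k) (b k)) t‖ ≤ K * (2 * Λ / L) ^ j := by
    intro k hk j hj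
    rw [norm_iteratedFDeriv_eq_norm_iteratedDeriv, Real.norm_eq_abs]
    refine (abs_iteratedDeriv_intervalBump_le (hab k hk) (hK j (hj.trans hn)) t).trans ?_
    have hlen := sub_pos.2 (hab k hk)
    have hscale : 2 / (b k - a k) ≤ 2 * Λ / L := by
      rw [div_le_div_iff₀ hlen hL]
      nlinarith [(div_le_iff₀ hlen).1 (hcomp k hk)]
    gcongr
  rw [← Real.norm_eq_abs, ← norm_iteratedFDeriv_eq_norm_iteratedDeriv]
  calc _ ≤ (2 ^ n * K) ^ #s * (2 * Λ / L) ^ n :=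
        norm_iteratedFDeriv_prod_le_of_forall_le (fun k _ => contDiff_intervalBump)
          (by positivity) (by positivity) hfactor
    _ ≤ (2 ^ M * K) ^ (N + 1) * ((2 * Λ) ^ M * L ^ (-(n : ℤ))) := by
        have hbase : 1 ≤ 2 ^ M * K := one_le_mul_of_one_le_of_one_le (one_le_pow₀ one_le_two) hK1
        rw [div_pow, div_eq_mul_inv, zpow_neg, zpow_natCast]
        gcongr
        · calc (2 ^ n * K) ^ #s ≤ (2 ^ M * K) ^ #s := by gcongr; exact one_le_two
            _ ≤ (2 ^ M * K) ^ (N + 1) := pow_le_pow_right₀ hbase hs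
        · linarith
    _ = _ := by ring

theorem sequentialPartition_rectBump_eventuallyEq [DecidableEq ι] (hφ : φ.rOut ≤ 1)
    (hab : ∀ k, a k < b k) (hcd : ∀ k, c k < d k) (i : ι) (x : ℝ × ℝ) :
    sequentialPartition e (fun k => rectBump φ (a k) (b k) (c k) (d k)) i =ᶠ[𝓝 x] fun p =>
      ∑ S ∈ {k ∈ predecessors e i | x ∈ Icc (a k) (b k) ×ˢ Icc (c k) (d k)}.powerset,
        ((-1) ^ #S * ∏ k ∈ insert i S, intervalBump φ (a k) (b k) p.1) *
          ∏ k ∈ insert i S, intervalBump φ (c k) (d k) p.2 := by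
  refine (sequentialPartition_eventuallyEq_sum_powerset (filter_subset _ _)
    fun k hk hkA => ?_).trans (Eventually.of_forall fun p => sum_congr rfl fun S _ => by
      simp only [rectBump, prod_mul_distrib]; ring)
  have hx : x ∉ Icc (a k) (b k) ×ˢ Icc (c k) (d k) := fun h => hkA (mem_filter.2 ⟨hk, h⟩)
  filter_upwards [(isClosed_Icc.prod isClosed_Icc).isOpen_compl.mem_nhds hx] with p hp
  exact Function.notMem_support.1 fun h => hp (support_rectBump_subset hφ (hab k) (hcd k) h)

theorem hasSum_sequentialPartition_rectBump (hφ : φ.rOut ≤ 1) (hab : ∀ k, a k < b k)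
    (hcd : ∀ k, c k < d k) {Ω : Set (ℝ × ℝ)} (hsub : ∀ k, Icc (a k) (b k) ×ˢ Icc (c k) (d k) ⊆ Ω)
    (hcover : Ω = ⋃ k, Icc ((a k + b k) / 2 - φ.rIn * (b k - a k) / 2)
      ((a k + b k) / 2 + φ.rIn * (b k - a k) / 2) ×ˢ
        Icc ((c k + d k) / 2 - φ.rIn * (d k - c k) / 2) ((c k + d k) / 2 + φ.rIn * (d k - c k) / 2))
    {x : ℝ × ℝ} (hfin : {k | x ∈ Icc (a k) (b k) ×ˢ Icc (c k) (d k)}.Finite) :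
    HasSum (fun i => sequentialPartition e (fun k => rectBump φ (a k) (b k) (c k) (d k)) i x)
      (Ω.indicator (fun _ => 1) x) := by
  have hsupp := fun k => support_rectBump_subset hφ (hab k) (hcd k)
  by_cases hx : x ∈ Ω
  · obtain ⟨j, hj⟩ := mem_iUnion.1 (hcover ▸ hx)
    rw [indicator_of_mem hx]
    exact hasSum_sequentialPartition_eq_one_of_eq_one _
      (fun k hk => Function.notMem_support.1 fun h => hk (hfin.mem_toFinset.2 (hsupp k h)))
      (rectBump_eq_one (hab j) (hcd j) hj)
  · rw [indicator_of_notMem hx]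
    convert hasSum_zero with i
    exact Function.notMem_support.1 fun h =>
      hx (hsub i (hsupp i (support_sequentialPartition_subset i h)))

theorem abs_iteratedDeriv_iteratedDeriv_sequentialPartition_rectBump_le_of_mem (hφ : φ.rOut ≤ 1)
    {M N : ℕ} {K Λ : ℝ} (hK1 : 1 ≤ K) (hK : ∀ j ≤ M, ∀ t, |iteratedDeriv j φ t| ≤ K)
    (hab : ∀ k, a k < b k) (hcd : ∀ k, c k < d k) {i : ι} {x : ℝ × ℝ}
    (hx : x ∈ Icc (a i) (b i) ×ˢ Icc (c i) (d i))
    (hfin : {k | x ∈ Icc (a k) (b k) ×ˢ Icc (c k) (d k)}.Finite)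
    (hcard : {k | x ∈ Icc (a k) (b k) ×ˢ Icc (c k) (d k)}.ncard ≤ N)
    (hcomp : ∀ k, x ∈ Icc (a k) (b k) ×ˢ Icc (c k) (d k) →
      (b i - a i) / (b k - a k) ≤ Λ ∧ (d i - c i) / (d k - c k) ≤ Λ)
    {β₁ β₂ : ℕ} (hβ : β₁ + β₂ ≤ M) :
    |iteratedDeriv β₁ (fun u => iteratedDeriv β₂ (fun v =>
        sequentialPartition e (fun k => rectBump φ (a k) (b k) (c k) (d k)) i (u, v)) x.2) x.1| ≤
      2 ^ N * ((2 ^ M * K) ^ (N + 1) * (2 * Λ) ^ M) ^ 2 *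
        (b i - a i) ^ (-(β₁ : ℤ)) * (d i - c i) ^ (-(β₂ : ℤ)) := by
  classical
  have hL := sub_pos.2 (hab i)
  have hL' := sub_pos.2 (hcd i)
  set A := {k ∈ predecessors e i | x ∈ Icc (a k) (b k) ×ˢ Icc (c k) (d k)}
  have hA : #A ≤ N := by
    rw [Set.ncard_eq_toFinset_card _ hfin] at hcard
    exact (Finset.card_le_card fun k hk => hfin.mem_toFinset.2 (mem_filter.1 hk).2).trans hcard
  have hΛ : 1 ≤ Λ := by simpa [div_self hL.ne'] using (hcomp i hx).1
  have hmem : ∀ S ∈ A.powerset, ∀ k ∈ insert i S, x ∈ Icc (a k) (b k) ×ˢ Icc (c k) (d k) :=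
    fun S hS k hk => (mem_insert.1 hk).elim (· ▸ hx)
      fun hk => (mem_filter.1 (mem_powerset.1 hS hk)).2
  have hcardS : ∀ S ∈ A.powerset, #(insert i S) ≤ N + 1 := fun S hS =>
    (card_insert_le i S).trans (by linarith [Finset.card_le_card (mem_powerset.1 hS)])
  rw [iteratedDeriv_iteratedDeriv_eq_sum_of_eventuallyEq _
    (F := fun S u => (-1) ^ #S * ∏ k ∈ insert i S, intervalBump φ (a k) (b k) u)
    (G := fun S v => ∏ k ∈ insert i S, intervalBump φ (c k) (d k) v)
    (fun S _ => contDiffAt_const.mul (contDiff_prod fun k _ => contDiff_intervalBump).contDiffAt)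
    (fun S _ => (contDiff_prod fun k _ => contDiff_intervalBump).contDiffAt)
    (sequentialPartition_rectBump_eventuallyEq e hφ hab hcd i x)]
  set Q := (2 ^ M * K) ^ (N + 1) * (2 * Λ) ^ M
  calc _ ≤ ∑ S ∈ A.powerset, Q * (b i - a i) ^ (-(β₁ : ℤ)) * (Q * (d i - c i) ^ (-(β₂ : ℤ))) := by
        refine (abs_sum_le_sum_abs _ _).trans (sum_le_sum fun S hS => ?_)
        rw [abs_mul, iteratedDeriv_const_mul_field, abs_mul, abs_pow, abs_neg, abs_one, one_pow,
          one_mul]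
        exact mul_le_mul
          (abs_iteratedDeriv_prod_intervalBump_le (by omega) hK1 hK hΛ hL
            (hcardS S hS) (fun k _ => hab k) (fun k hk => (hcomp k (hmem S hS k hk)).1) x.1)
          (abs_iteratedDeriv_prod_intervalBump_le (by omega) hK1 hK hΛ hL'
            (hcardS S hS) (fun k _ => hcd k) (fun k hk => (hcomp k (hmem S hS k hk)).2) x.2)
          (abs_nonneg _) (by positivity)
    _ = #A.powerset * (Q * (b i - a i) ^ (-(β₁ : ℤ)) * (Q * (d i - c i) ^ (-(β₂ : ℤ)))) := by
        rw [sum_const, nsmul_eq_mul]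
    _ ≤ 2 ^ N * (Q * (b i - a i) ^ (-(β₁ : ℤ)) * (Q * (d i - c i) ^ (-(β₂ : ℤ)))) := by
        rw [card_powerset, Nat.cast_pow, Nat.cast_two]
        gcongr
        exact one_le_two
    _ = _ := by ring

theorem abs_iteratedDeriv_iteratedDeriv_sequentialPartition_rectBump_le (hφ : φ.rOut ≤ 1)
    {M N : ℕ} {K Λ : ℝ} (hK1 : 1 ≤ K) (hK : ∀ j ≤ M, ∀ t, |iteratedDeriv j φ t| ≤ K)
    (hab : ∀ k, a k < b k) (hcd : ∀ k, c k < d k) (i : ι) (x : ℝ × ℝ)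
    (hfin : {k | x ∈ Icc (a k) (b k) ×ˢ Icc (c k) (d k)}.Finite)
    (hcard : {k | x ∈ Icc (a k) (b k) ×ˢ Icc (c k) (d k)}.ncard ≤ N)
    (hcomp : ∀ k,
      (Icc (a i) (b i) ×ˢ Icc (c i) (d i) ∩ Icc (a k) (b k) ×ˢ Icc (c k) (d k)).Nonempty →
        (b i - a i) / (b k - a k) ≤ Λ ∧ (d i - c i) / (d k - c k) ≤ Λ)
    {β₁ β₂ : ℕ} (hβ : β₁ + β₂ ≤ M) :
    |iteratedDeriv β₁ (fun u => iteratedDeriv β₂ (fun v =>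
        sequentialPartition e (fun k => rectBump φ (a k) (b k) (c k) (d k)) i (u, v)) x.2) x.1| ≤
      2 ^ N * ((2 ^ M * K) ^ (N + 1) * (2 * Λ) ^ M) ^ 2 *
        (b i - a i) ^ (-(β₁ : ℤ)) * (d i - c i) ^ (-(β₂ : ℤ)) := by
  rcases em (x ∈ Icc (a i) (b i) ×ˢ Icc (c i) (d i)) with hx | hx
  · exact abs_iteratedDeriv_iteratedDeriv_sequentialPartition_rectBump_le_of_mem e hφ hK1 hK hab
      hcd hx hfin hcard (fun k hk => hcomp k ⟨x, hx, hk⟩) hβ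
  have hsupp := (support_sequentialPartition_subset (e := e)
    (w := fun k => rectBump φ (a k) (b k) (c k) (d k)) i).trans
    (support_rectBump_subset hφ (hab i) (hcd i))
  rw [iteratedDeriv_iteratedDeriv_eq_zero_of_notMem_tsupport _ _
    fun h => hx (closure_minimal hsupp (isClosed_Icc.prod isClosed_Icc) h), abs_zero]
  have := sub_pos.2 (hab i)
  have := sub_pos.2 (hcd i)
  positivity

end RectanglePartition

theorem whitney_rectangle_partition_of_unity
    (α : ℝ) (hα₀ : 0 < α) (hα₁ : α < 1) (M₁ : ℕ) (M₂ : ℝ) (hM₂ : 0 < M₂) :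
    ∃ C : ℕ → ℝ, (∀ M, 0 < C M) ∧
      ∀ (ι : Type) [Countable ι] (Ω : Set (ℝ × ℝ)) (a b c d : ι → ℝ),
        IsOpen Ω →
        (∀ i, a i < b i) → (∀ i, c i < d i) →
        -- (1) each rectangle is contained in Ω
        (∀ i, Set.Icc (a i) (b i) ×ˢ Set.Icc (c i) (d i) ⊆ Ω) →
        -- (2) Ω is covered by the α-dilates
        (Ω = ⋃ i, Set.Icc ((a i + b i) / 2 - α * (b i - a i) / 2)
                    ((a i + b i) / 2 + α * (b i - a i) / 2) ×ˢ
                  Set.Icc ((c i + d i) / 2 - α * (d i - c i) / 2)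
                    ((c i + d i) / 2 + α * (d i - c i) / 2)) →
        -- (3) bounded overlap
        (∀ x ∈ Ω, ({i | x ∈ Set.Icc (a i) (b i) ×ˢ Set.Icc (c i) (d i)}).Finite ∧
          ({i | x ∈ Set.Icc (a i) (b i) ×ˢ Set.Icc (c i) (d i)}).ncard ≤ M₁) →
        -- (4) intersecting rectangles have comparable side lengths
        (∀ i j, ((Set.Icc (a i) (b i) ×ˢ Set.Icc (c i) (d i)) ∩
            (Set.Icc (a j) (b j) ×ˢ Set.Icc (c j) (d j))).Nonempty →
          1 / M₂ < (b i - a i) / (b j - a j) ∧ (b i - a i) / (b j - a j) < M₂ ∧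
          1 / M₂ < (d i - c i) / (d j - c j) ∧ (d i - c i) / (d j - c j) < M₂) →
        ∃ ψ : ι → ℝ × ℝ → ℝ,
          (∀ i, ContDiff ℝ (⊤ : ℕ∞) (ψ i)) ∧
          (∀ i, Function.support (ψ i) ⊆ Set.Icc (a i) (b i) ×ˢ Set.Icc (c i) (d i)) ∧
          (∀ x : ℝ × ℝ, HasSum (fun i => ψ i x) (Set.indicator Ω (fun _ => (1 : ℝ)) x)) ∧
          (∀ (M : ℕ) (i : ι) (x : ℝ × ℝ) (β₁ β₂ : ℕ), β₁ + β₂ ≤ M →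
            |iteratedDeriv β₁ (fun u => iteratedDeriv β₂ (fun v => ψ i (u, v)) x.2) x.1| ≤
              C M * (b i - a i) ^ (-(β₁ : ℤ)) * (d i - c i) ^ (-(β₂ : ℤ))) := by
  let φ : ContDiffBump (0 : ℝ) := ⟨α, 1, hα₀, hα₁⟩
  choose K hK1 hK using φ.contDiff.exists_forall_abs_iteratedDeriv_le φ.hasCompactSupport
  refine ⟨fun M => 2 ^ M₁ * ((2 ^ M * K M) ^ (M₁ + 1) * (2 * M₂) ^ M) ^ 2,
    fun M => by have := hK1 M; positivity, ?_⟩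
  intro ι _ Ω a b c d _ hab hcd hsub hcover hoverlap hcomp
  obtain ⟨e⟩ := nonempty_embedding_nat ι
  have hlocfin : ∀ x, {k | x ∈ Icc (a k) (b k) ×ˢ Icc (c k) (d k)}.Finite ∧
      {k | x ∈ Icc (a k) (b k) ×ˢ Icc (c k) (d k)}.ncard ≤ M₁ := fun x => by
    by_cases hx : x ∈ Ω
    · exact hoverlap x hx
    · rw [show {k | x ∈ Icc (a k) (b k) ×ˢ Icc (c k) (d k)} = ∅ from
        Set.eq_empty_of_forall_notMem fun k hk => hx (hsub k hk)]
      simp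
  exact ⟨sequentialPartition e fun k => rectBump φ (a k) (b k) (c k) (d k),
    contDiff_sequentialPartition fun k => contDiff_rectBump,
    fun i => (support_sequentialPartition_subset i).trans
      (support_rectBump_subset le_rfl (hab i) (hcd i)),
    fun x => hasSum_sequentialPartition_rectBump e le_rfl hab hcd hsub hcover (hlocfin x).1,
    fun M i x β₁ β₂ hβ => abs_iteratedDeriv_iteratedDeriv_sequentialPartition_rectBump_le e le_rfl
      (hK1 M) (hK M) hab hcd i x (hlocfin x).1 (hlocfin x).2
      (fun k hk => ⟨(hcomp i k hk).2.1.le, (hcomp i k hk).2.2.2.le⟩) hβ⟩
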